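/- Super-solution criterion in the negative case: Let h : V → ℝ and c < 0. Then there exists a function u : V → ℝ satisfying −Δu(x) = h(x)e^{u(x)} − c for all x ∈ V if and only if there exists a super-solution, i.e. a function ψ : V → ℝ with Δψ(x) + h(x)e^{ψ(x)} − c ≤ 0 for all x ∈ V. -/

import Mathlib

open Finset Real

/-- The graph Laplacian: `Δu(x) = (1/μ x) * Σ_y ω x y * (u y - u x)`. -/
noncomputable def graphLap {V : Type*} [Fintype V] (ω : V → V → ℝ) (μ : V → ℝ)
    (u : V → ℝ) (x : V) : ℝ :=
  (1 / μ x) * ∑ y, ω x y * (u y - u x)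

/-- The integral of `f` over `V` with respect to the vertex measure `μ`. -/
noncomputable def graphInt {V : Type*} [Fintype V] (μ : V → ℝ) (f : V → ℝ) : ℝ :=
  ∑ x, f x * μ x

/-- Connectivity: any two distinct vertices are joined by a chain of positively
weighted edges. -/
def graphConn {V : Type*} (ω : V → V → ℝ) : Prop :=
  ∀ x y : V, x ≠ y → ∃ (m : ℕ) (p : ℕ → V), p 0 = x ∧ p m = y ∧
    ∀ i < m, 0 < ω (p i) (p (i + 1))

/-- The gradient form `Γ(u,v)(x)`. -/
noncomputable def graphGamma {V : Type*} [Fintype V] (ω : V → V → ℝ) (μ : V → ℝ)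
    (u v : V → ℝ) (x : V) : ℝ :=
  (1 / (2 * μ x)) * ∑ y, ω x y * (u y - u x) * (v y - v x)

/-- The length of the gradient: `|∇u|(x) = √(Γ(u,u)(x))`. -/
noncomputable def graphGradNorm {V : Type*} [Fintype V] (ω : V → V → ℝ) (μ : V → ℝ)
    (u : V → ℝ) (x : V) : ℝ :=
  Real.sqrt (graphGamma ω μ u u x)

/-- The functional `J_{h,f}(u) = ∫_V (½|∇u|² + f·u − h·e^u) dμ`. -/
noncomputable def Jfunc {V : Type*} [Fintype V] (ω : V → V → ℝ) (μ : V → ℝ)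
    (h f : V → ℝ) (u : V → ℝ) : ℝ :=
  graphInt μ (fun x => (1 / 2) * (graphGradNorm ω μ u x) ^ 2 + f x * u x - h x * Real.exp (u x))

/-!
Sub- and super-solution method, done variationally. Since `c < 0` and `V` is finite, a
constant `a` far enough below `ψ` is a sub-solution. Minimise `E(u) = ∫ (Γ(u,u)/2 - G(u)) dμ`,
where `∂ₜG = F = h eᵗ - c`, over the compact box `a ≤ u ≤ ψ`. By Green's formula
`∂E/∂u(x) = -μ(x) (Δu(x) + F(u(x)))`. Where `u(x) < ψ(x)` (resp. `a < u(x)`), one-sided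
minimality in that coordinate gives `Δu + F(u) ≤ 0` (resp. `≥ 0`) at `x`; where `u` touches
`ψ` (resp. `a`), the comparison `Δu(x) ≤ Δψ(x)` (resp. `Δa ≤ Δu(x)`) and the super-
(resp. sub-) solution inequality give it instead.
-/

open Filter

theorem IsMinOn.hasDerivAt_mul_sub_nonneg {g : ℝ → ℝ} {s : Set ℝ} {a b g' : ℝ}
    (hs : Convex ℝ s) (hmin : IsMinOn g s a) (ha : a ∈ s) (hb : b ∈ s)
    (hg : HasDerivAt g g' a) : 0 ≤ g' * (b - a) := by
  simpa [mul_comm] using hmin.localize.hasFDerivWithinAt_nonneg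
    hg.hasFDerivAt.hasFDerivWithinAt
    (sub_mem_posTangentConeAt_of_segment_subset (hs.segment_subset ha hb))

theorem IsMinOn.comp_update_pi {ι : Type*} [DecidableEq ι] {β : ι → Type*} {γ : Type*}
    [Preorder γ] {f : (∀ i, β i) → γ} {s : ∀ i, Set (β i)} {u : ∀ i, β i}
    (hmin : IsMinOn f (Set.univ.pi s) u) (hu : u ∈ Set.univ.pi s) (i : ι) :
    IsMinOn (fun t => f (Function.update u i t)) (s i) (u i) := by
  intro t ht
  simpa using hmin (Set.update_mem_pi_iff_of_mem hu |>.2 fun _ => ht)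

section Graph

variable {V : Type*} [Fintype V] {ω : V → V → ℝ} {μ : V → ℝ}

theorem graphLap_le_graphLap_of_le_of_eq {u v : V → ℝ} {x : V} (hω : ∀ y, 0 ≤ ω x y)
    (hμ : 0 ≤ μ x) (huv : u ≤ v) (hx : u x = v x) :
    graphLap ω μ u x ≤ graphLap ω μ v x := by
  unfold graphLap
  rw [hx]
  gcongr with y
  · exact hω y
  · exact huv y

theorem graphLap_const (a : ℝ) (x : V) : graphLap ω μ (fun _ => a) x = 0 := by
  simp [graphLap]

theorem graphInt_graphGamma (hsymm : ∀ x y, ω x y = ω y x) (hμ : ∀ x, μ x ≠ 0)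
    (u v : V → ℝ) :
    graphInt μ (graphGamma ω μ u v) = -graphInt μ (fun x => v x * graphLap ω μ u x) := by
  have hswap : ∑ x, ∑ y, ω x y * (u y - u x) * v y = -∑ x, ∑ y, ω x y * (u y - u x) * v x := by
    rw [Finset.sum_comm, ← Finset.sum_neg_distrib]
    refine Finset.sum_congr rfl fun x _ => ?_
    rw [← Finset.sum_neg_distrib]
    refine Finset.sum_congr rfl fun y _ => ?_
    rw [hsymm]; ring
  have hsplit : ∑ x, ∑ y, ω x y * (u y - u x) * (v y - v x)
      = ∑ x, ∑ y, ω x y * (u y - u x) * v y - ∑ x, ∑ y, ω x y * (u y - u x) * v x := by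
    simp only [mul_sub, Finset.sum_sub_distrib]
  calc graphInt μ (graphGamma ω μ u v)
      = (∑ x, ∑ y, ω x y * (u y - u x) * (v y - v x)) / 2 := by
        rw [graphInt, Finset.sum_div]
        refine Finset.sum_congr rfl fun x _ => ?_
        rw [graphGamma]
        field_simp [hμ x]
    _ = -∑ x, v x * ∑ y, ω x y * (u y - u x) := by
        simp only [hsplit, hswap, Finset.sum_mul, mul_comm (v _)]
        ring
    _ = -graphInt μ (fun x => v x * graphLap ω μ u x) := by
        simp only [graphInt, graphLap]
        congr 1
        refine Finset.sum_congr rfl fun x _ => ?_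
        field_simp [hμ x]

noncomputable def graphEnergy (ω : V → V → ℝ) (μ : V → ℝ) (G : V → ℝ → ℝ) (u : V → ℝ) : ℝ :=
  graphInt μ (fun x => graphGamma ω μ u u x / 2 - G x (u x))

theorem continuous_graphEnergy {G : V → ℝ → ℝ} (hG : ∀ x, Continuous (G x)) :
    Continuous (graphEnergy ω μ G) := by
  unfold graphEnergy graphInt graphGamma
  fun_prop

theorem hasDerivAt_graphGamma_self {w : ℝ → V → ℝ} {w' : V → ℝ} {t : ℝ}
    (hw : ∀ y, HasDerivAt (fun s => w s y) (w' y) t) (x : V) :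
    HasDerivAt (fun s => graphGamma ω μ (w s) (w s) x) (2 * graphGamma ω μ (w t) w' x) t := by
  unfold graphGamma
  have hterm : ∀ y, HasDerivAt (fun s => ω x y * (w s y - w s x) * (w s y - w s x))
      (2 * (ω x y * (w t y - w t x) * (w' y - w' x))) t := fun y => by
    refine ((((hw y).fun_sub (hw x)).const_mul (ω x y)).mul ((hw y).fun_sub (hw x))).congr_deriv ?_
    ring
  refine ((HasDerivAt.fun_sum fun y _ => hterm y).const_mul (1 / (2 * μ x))).congr_deriv ?_
  rw [← Finset.mul_sum]
  ring

theorem hasDerivAt_graphEnergy {G : V → ℝ → ℝ} {g : V → ℝ} {w : ℝ → V → ℝ} {w' : V → ℝ}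
    {t : ℝ} (hG : ∀ x, HasDerivAt (G x) (g x) (w t x))
    (hw : ∀ y, HasDerivAt (fun s => w s y) (w' y) t) :
    HasDerivAt (fun s => graphEnergy ω μ G (w s))
      (graphInt μ (fun x => graphGamma ω μ (w t) w' x - g x * w' x)) t := by
  unfold graphEnergy graphInt
  refine HasDerivAt.fun_sum fun x _ => ?_
  refine ((((hasDerivAt_graphGamma_self hw x).div_const 2).sub
    ((hG x).comp t (hw x))).mul_const (μ x)).congr_deriv ?_
  ring

theorem hasDerivAt_graphEnergy_update [DecidableEq V] (hsymm : ∀ x y, ω x y = ω y x)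
    (hμ : ∀ x, μ x ≠ 0) {G F : V → ℝ → ℝ} (hG : ∀ x t, HasDerivAt (G x) (F x t) t)
    (u : V → ℝ) (x₀ : V) :
    HasDerivAt (fun t => graphEnergy ω μ G (Function.update u x₀ t))
      (-(μ x₀ * (graphLap ω μ u x₀ + F x₀ (u x₀)))) (u x₀) := by
  have hw := hasDerivAt_pi.1 (hasDerivAt_update u x₀ (u x₀))
  refine (hasDerivAt_graphEnergy (fun x => hG x _) hw).congr_deriv ?_
  rw [Function.update_eq_self]
  have hsplit := graphInt_graphGamma hsymm hμ u (Pi.single x₀ 1)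
  simp only [graphInt, sub_mul, Finset.sum_sub_distrib] at hsplit ⊢
  rw [hsplit]
  simp only [Pi.single_apply, ite_mul, one_mul, zero_mul, sum_ite_eq', mem_univ, ↓reduceIte,
    mul_ite, mul_one, mul_zero]
  ring

end Graph

section SubSuper

variable {V : Type*} [Fintype V] {ω : V → V → ℝ} {μ : V → ℝ} {G F : V → ℝ → ℝ}
  {φ ψ u : V → ℝ}

theorem graphLap_add_nonpos_of_isMinOn_pi [DecidableEq V] (hsymm : ∀ x y, ω x y = ω y x)
    (hω : ∀ x y, 0 ≤ ω x y) (hμ : ∀ x, 0 < μ x) (hG : ∀ x t, HasDerivAt (G x) (F x t) t)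
    (hmin : IsMinOn (graphEnergy ω μ G) (Set.univ.pi fun x => Set.Icc (φ x) (ψ x)) u)
    (hu : u ∈ Set.univ.pi fun x => Set.Icc (φ x) (ψ x))
    (hψ : ∀ x, graphLap ω μ ψ x + F x (ψ x) ≤ 0) (x₀ : V) :
    graphLap ω μ u x₀ + F x₀ (u x₀) ≤ 0 := by
  have hux : u x₀ ∈ Set.Icc (φ x₀) (ψ x₀) := hu x₀ trivial
  rcases hux.2.lt_or_eq with hlt | heq
  · have hslope := (hmin.comp_update_pi hu x₀).hasDerivAt_mul_sub_nonneg (convex_Icc _ _) hux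
      ⟨hux.1.trans hux.2, le_rfl⟩
      (hasDerivAt_graphEnergy_update hsymm (fun x => (hμ x).ne') hG u x₀)
    have hpos : 0 < μ x₀ * (ψ x₀ - u x₀) := mul_pos (hμ x₀) (sub_pos.2 hlt)
    nlinarith
  · calc graphLap ω μ u x₀ + F x₀ (u x₀) ≤ graphLap ω μ ψ x₀ + F x₀ (ψ x₀) := by
          rw [heq]
          gcongr
          exact graphLap_le_graphLap_of_le_of_eq (hω x₀) (hμ x₀).le
            (fun x => (hu x trivial).2) heq
      _ ≤ 0 := hψ x₀

theorem graphLap_add_nonneg_of_isMinOn_pi [DecidableEq V] (hsymm : ∀ x y, ω x y = ω y x)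
    (hω : ∀ x y, 0 ≤ ω x y) (hμ : ∀ x, 0 < μ x) (hG : ∀ x t, HasDerivAt (G x) (F x t) t)
    (hmin : IsMinOn (graphEnergy ω μ G) (Set.univ.pi fun x => Set.Icc (φ x) (ψ x)) u)
    (hu : u ∈ Set.univ.pi fun x => Set.Icc (φ x) (ψ x))
    (hφ : ∀ x, 0 ≤ graphLap ω μ φ x + F x (φ x)) (x₀ : V) :
    0 ≤ graphLap ω μ u x₀ + F x₀ (u x₀) := by
  have hux : u x₀ ∈ Set.Icc (φ x₀) (ψ x₀) := hu x₀ trivial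
  rcases hux.1.lt_or_eq with hlt | heq
  · have hslope := (hmin.comp_update_pi hu x₀).hasDerivAt_mul_sub_nonneg (convex_Icc _ _) hux
      ⟨le_rfl, hux.1.trans hux.2⟩
      (hasDerivAt_graphEnergy_update hsymm (fun x => (hμ x).ne') hG u x₀)
    have hpos : 0 < μ x₀ * (u x₀ - φ x₀) := mul_pos (hμ x₀) (sub_pos.2 hlt)
    nlinarith
  · calc 0 ≤ graphLap ω μ φ x₀ + F x₀ (φ x₀) := hφ x₀
      _ ≤ graphLap ω μ u x₀ + F x₀ (u x₀) := by
          rw [heq]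
          gcongr
          exact graphLap_le_graphLap_of_le_of_eq (hω x₀) (hμ x₀).le
            (fun x => (hu x trivial).1) heq

theorem exists_graphLap_add_eq_zero_of_subsolution_of_supersolution
    (hsymm : ∀ x y, ω x y = ω y x) (hω : ∀ x y, 0 ≤ ω x y) (hμ : ∀ x, 0 < μ x)
    (hG : ∀ x t, HasDerivAt (G x) (F x t) t) (hφψ : φ ≤ ψ)
    (hφ : ∀ x, 0 ≤ graphLap ω μ φ x + F x (φ x)) (hψ : ∀ x, graphLap ω μ ψ x + F x (ψ x) ≤ 0) :
    ∃ u, φ ≤ u ∧ u ≤ ψ ∧ ∀ x, graphLap ω μ u x + F x (u x) = 0 := by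
  classical
  have hGc : ∀ x, Continuous (G x) := fun x =>
    continuous_iff_continuousAt.2 fun t => (hG x t).continuousAt
  obtain ⟨u, hu, hmin⟩ := (isCompact_univ_pi fun x => isCompact_Icc).exists_isMinOn
    ⟨ψ, fun x _ => ⟨hφψ x, le_rfl⟩⟩ (continuous_graphEnergy hGc).continuousOn
  exact ⟨u, fun x => (hu x trivial).1, fun x => (hu x trivial).2, fun x => le_antisymm
    (graphLap_add_nonpos_of_isMinOn_pi hsymm hω hμ hG hmin hu hψ x)
    (graphLap_add_nonneg_of_isMinOn_pi hsymm hω hμ hG hmin hu hφ x)⟩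

end SubSuper

theorem eventually_forall_lt_mul_exp_atBot {V : Type*} [Finite V] (h : V → ℝ) {c : ℝ}
    (hc : c < 0) : ∀ᶠ a in atBot, ∀ x, c < h x * Real.exp a :=
  eventually_all.2 fun x =>
    (Real.tendsto_exp_atBot.const_mul (h x)).eventually (lt_mem_nhds (by rwa [mul_zero]))

theorem kazdan_warner_supersolution_criterion_general {V : Type*} [Fintype V]
    (ω : V → V → ℝ) (μ : V → ℝ)
    (hsymm : ∀ x y, ω x y = ω y x)
    (hnonneg : ∀ x y, 0 ≤ ω x y)
    (hμ : ∀ x, 0 < μ x)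
    (h : V → ℝ) (c : ℝ) (hc : c < 0) :
    (∃ u : V → ℝ, ∀ x, -graphLap ω μ u x = h x * Real.exp (u x) - c) ↔
      (∃ ψ : V → ℝ, ∀ x, graphLap ω μ ψ x + h x * Real.exp (ψ x) - c ≤ 0) := by
  refine ⟨fun ⟨u, hu⟩ => ⟨u, fun x => by linarith [hu x]⟩, fun ⟨ψ, hψ⟩ => ?_⟩
  obtain ⟨a, hsub, haψ⟩ := ((eventually_forall_lt_mul_exp_atBot h hc).and
    (eventually_all.2 fun x => eventually_le_atBot (ψ x))).exists
  have hG : ∀ x t, HasDerivAt (fun s => h x * Real.exp s - c * s) (h x * Real.exp t - c) t :=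
    fun x t => by
      simpa using
        ((Real.hasDerivAt_exp t).const_mul (h x)).fun_sub ((hasDerivAt_id' t).const_mul c)
  obtain ⟨u, -, -, hu⟩ := exists_graphLap_add_eq_zero_of_subsolution_of_supersolution
    hsymm hnonneg hμ hG (φ := fun _ => a) haψ (fun x => by simp [graphLap_const, (hsub x).le])
    (fun x => by simpa only [add_sub_assoc] using hψ x)
  exact ⟨u, fun x => by linarith [hu x]⟩

/-- Super-solution criterion in the negative case: for `c < 0`, the equation
`−Δu = h e^u − c` has a solution if and only if it has a super-solution. -/
theorem kazdan_warner_supersolution_criterion {V : Type*} [Fintype V] [Nonempty V]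
    (ω : V → V → ℝ) (μ : V → ℝ)
    (hsymm : ∀ x y, ω x y = ω y x)
    (hnonneg : ∀ x y, 0 ≤ ω x y)
    (hconn : graphConn ω)
    (hμ : ∀ x, 0 < μ x)
    (h : V → ℝ) (c : ℝ) (hc : c < 0) :
    (∃ u : V → ℝ, ∀ x, -graphLap ω μ u x = h x * Real.exp (u x) - c) ↔
      (∃ ψ : V → ℝ, ∀ x, graphLap ω μ ψ x + h x * Real.exp (ψ x) - c ≤ 0) :=
  kazdan_warner_supersolution_criterion_general ω μ hsymm hnonneg hμ h c hc
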